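/- arXiv:1508.06072 — 2 statements merged into one kernel-verified Lean document; each statement's English description precedes it below -/
import Mathlib

section
/- Suppose that for every n ≥ 1 there are nonnegative real numbers α_j^{(n)} (j ≥ 1) such that F_n(Ψ(w)) = wⁿ + ∑_{j≥1} α_j^{(n)} w^{−j} for all |w| > 1, where Ψ := Φ⁻¹ (by Curtiss's theorem this holds whenever K is in the positive class). Then for every n ≥ 1 and every r > 1, ‖F_n‖_K ≥ 1 + ∑_{j≥1} α_j^{(n)} r^{−j}. -/
open Complex Filter Set Metric

noncomputable section

/-- Sup-norm of `g` over the set `L`. -/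
def supNorm (g : ℂ → ℂ) (L : Set ℂ) : ℝ :=
  sSup ((fun z => ‖g z‖) '' L)

/-- A continuum: a compact connected set with at least two points whose complement
in the Riemann sphere (one-point compactification of `ℂ`) is simply connected. -/
def IsContinuum (K : Set ℂ) : Prop :=
  IsCompact K ∧ IsConnected K ∧ K.Nontrivial ∧
  SimplyConnectedSpace ↥((OnePoint.some '' K)ᶜ : Set (OnePoint ℂ))

/-- Exterior Riemann map for `K`, normalized at infinity with derivative `γ > 0`. -/
def IsExtRiemannMap (K : Set ℂ) (Φ : ℂ → ℂ) (γ : ℝ) : Prop :=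
  0 < γ ∧ DifferentiableOn ℂ Φ Kᶜ ∧
  Set.BijOn Φ Kᶜ {w : ℂ | 1 < ‖w‖} ∧
  Tendsto (fun z => Φ z / z) (Bornology.cobounded ℂ) (nhds (γ : ℂ))

/-- The Faber polynomials of `K` (relative to the exterior map `Φ`). -/
def IsFaberFamily (Φ : ℂ → ℂ) (F : ℕ → Polynomial ℂ) : Prop :=
  ∀ n : ℕ, (F n).degree = (n : ℕ) ∧
    Tendsto (fun z => Φ z ^ n - (F n).eval z) (Bornology.cobounded ℂ) (nhds 0)

/-- The Green level set `Ω_R`. -/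
def greenLevel (K : Set ℂ) (Φ : ℂ → ℂ) (R : ℝ) : Set ℂ :=
  K ∪ {z | z ∉ K ∧ ‖Φ z‖ < R}

/-- `f` has Faber coefficients `a`: the series `∑ aₙ Fₙ` converges to `f`
uniformly on compact subsets of `Ω`. -/
def HasFaberExpansion (F : ℕ → Polynomial ℂ) (Ω : Set ℂ) (f : ℂ → ℂ) (a : ℕ → ℂ) : Prop :=
  ∀ L : Set ℂ, L ⊆ Ω → IsCompact L →
    TendstoUniformlyOn (fun N z => ∑ n ∈ Finset.range N, a n * (F n).eval z) f atTop L

/-- The set of radii `R > 1` exhibiting the Bohr phenomenon for the Faber-Green condenser. -/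
def bohrSet (K : Set ℂ) (Φ : ℂ → ℂ) (F : ℕ → Polynomial ℂ) : Set ℝ :=
  {R : ℝ | 1 < R ∧ ∀ f : ℂ → ℂ, ∀ a : ℕ → ℂ,
    DifferentiableOn ℂ f (greenLevel K Φ R) →
    (∀ z ∈ greenLevel K Φ R, ‖f z‖ < 1) →
    HasFaberExpansion F (greenLevel K Φ R) f a →
    Summable (fun n => ‖a n‖ * supNorm (fun z => (F n).eval z) K) ∧
      ∑' n, ‖a n‖ * supNorm (fun z => (F n).eval z) K < 1}

/-- The Bohr radius of the Faber-Green condenser. -/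
def bohrRadius (K : Set ℂ) (Φ : ℂ → ℂ) (F : ℕ → Polynomial ℂ) : ℝ :=
  sInf (bohrSet K Φ F)

open Bornology Topology

/-! Along the real ray, `Re Fₙ(Ψ(s)) = sⁿ + ∑ αⱼ s⁻ʲ`, which for `1 < s ≤ r` is at least
`1 + ∑ αⱼ r⁻ʲ` because the `αⱼ` are nonnegative. The points `Ψ(s)` stay bounded since
`|Φ(z)| ~ γ|z|` at infinity, and any cluster point of them as `s → 1⁺` lies in `K`: outside `K`
the map `Φ` is continuous, so it would send such a point to `1`, which is not in its range.
Continuity of `Fₙ` carries the lower bound to that point of `K`. -/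

theorem Filter.Tendsto.isBounded_preimage {α β : Type*} [Bornology α] [Bornology β] {f : α → β}
    (hf : Tendsto f (cobounded α) (cobounded β)) {s : Set β} (hs : Bornology.IsBounded s) :
    Bornology.IsBounded (f ⁻¹' s) :=
  isBounded_def.2 (hf (isBounded_def.1 hs))

theorem tendsto_cobounded_of_tendsto_div {𝕜 : Type*} [NormedDivisionRing 𝕜] {f : 𝕜 → 𝕜} {c : 𝕜}
    (hc : c ≠ 0) (hf : Tendsto (fun z => f z / z) (cobounded 𝕜) (𝓝 c)) :
    Tendsto f (cobounded 𝕜) (cobounded 𝕜) := by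
  rw [← tendsto_norm_atTop_iff_cobounded]
  have hnorm : Tendsto (fun z => ‖f z / z‖ * ‖z‖) (cobounded 𝕜) atTop :=
    hf.norm.pos_mul_atTop (norm_pos_iff.2 hc) tendsto_norm_cobounded_atTop
  refine hnorm.congr' ?_
  filter_upwards [eventually_ne_cobounded 0] with z hz
  rw [norm_div, div_mul_cancel₀ _ (norm_ne_zero_iff.2 hz)]

theorem mem_of_mapClusterPt_of_tendsto_notMem {X Y ι : Type*} [TopologicalSpace X]
    [TopologicalSpace Y] [T2Space Y] {K : Set X} {S : Set Y} {Φ : X → Y} (hK : IsClosed K)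
    (hΦ : ContinuousOn Φ Kᶜ) (hmaps : MapsTo Φ Kᶜ S) {l : Filter ι} {u : ι → X} {x : X} {y : Y}
    (hx : MapClusterPt x l u) (hy : Tendsto (Φ ∘ u) l (𝓝 y)) (hyS : y ∉ S) : x ∈ K := by
  by_contra hxK
  have hΦx : MapClusterPt (Φ x) l (Φ ∘ u) :=
    hx.continuousAt_comp (hΦ.continuousAt (hK.isOpen_compl.mem_nhds hxK))
  have hΦxy : Φ x = y := eq_of_nhds_neBot (hΦx.clusterPt.mono hy)
  exact hyS (hΦxy ▸ hmaps hxK)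

theorem norm_le_supNorm {g : ℂ → ℂ} {L : Set ℂ} (hL : IsCompact L) (hg : ContinuousOn g L)
    {z : ℂ} (hz : z ∈ L) : ‖g z‖ ≤ supNorm g L :=
  le_csSup (hL.image_of_continuousOn hg.norm).bddAbove ⟨z, hz, rfl⟩

theorem hasSum_re_of_hasSum_ofReal_div_pow {a : ℕ → ℝ} {s : ℝ} {v : ℂ}
    (h : HasSum (fun j => (a j : ℂ) / (s : ℂ) ^ (j + 1)) v) :
    HasSum (fun j => a j / s ^ (j + 1)) v.re := by
  simpa [← ofReal_pow, ← ofReal_div] using hasSum_re h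

theorem one_add_tsum_div_pow_le_re {a : ℕ → ℝ} (ha : ∀ j, 0 ≤ a j) {n : ℕ} {r s : ℝ}
    (hs : 1 < s) (hsr : s ≤ r) (hr : Summable fun j => a j / r ^ (j + 1)) {v : ℂ}
    (hv : HasSum (fun j => (a j : ℂ) / (s : ℂ) ^ (j + 1)) (v - (s : ℂ) ^ n)) :
    1 + ∑' j, a j / r ^ (j + 1) ≤ v.re := by
  have hvs := hasSum_re_of_hasSum_ofReal_div_pow hv
  rw [sub_re, ← ofReal_pow, ofReal_re] at hvs
  have hterm : ∀ j, a j / r ^ (j + 1) ≤ a j / s ^ (j + 1) := fun j => by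
    gcongr; exact ha j
  calc 1 + ∑' j, a j / r ^ (j + 1) ≤ s ^ n + ∑' j, a j / s ^ (j + 1) :=
        add_le_add (one_le_pow₀ hs.le) (hr.tsum_le_tsum hterm hvs.summable)
    _ = v.re := by rw [hvs.tsum_eq]; ring

theorem supNorm_faber_ge_of_nonneg_coeffs_general
    (K : Set ℂ) (Φ : ℂ → ℂ) (γ : ℝ) (F : ℕ → Polynomial ℂ)
    (hK : IsContinuum K) (hΦ : IsExtRiemannMap K Φ γ)
    (Ψ : ℂ → ℂ)
    (hΨr : ∀ w : ℂ, 1 < ‖w‖ → Φ (Ψ w) = w)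
    (α : ℕ → ℕ → ℝ) (hα : ∀ n j : ℕ, 0 ≤ α n j)
    (hexp : ∀ n : ℕ, 1 ≤ n → ∀ w : ℂ, 1 < ‖w‖ →
      HasSum (fun j : ℕ => (α n (j + 1) : ℂ) / w ^ (j + 1)) ((F n).eval (Ψ w) - w ^ n)) :
    ∀ n : ℕ, 1 ≤ n → ∀ r : ℝ, 1 < r →
      1 + ∑' j : ℕ, α n (j + 1) / r ^ (j + 1) ≤ supNorm (fun z => (F n).eval z) K := by
  intro n hn r hr
  obtain ⟨hγ, hΦdiff, hΦbij, hΦlim⟩ := hΦ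
  have hnorm : ∀ s : ℝ, 1 < s → 1 < ‖(s : ℂ)‖ := fun s hs => by
    rwa [norm_real, Real.norm_of_nonneg (by linarith)]
  have hsum_r := (hasSum_re_of_hasSum_ofReal_div_pow (hexp n hn r (hnorm r hr))).summable
  have hnear : ∀ᶠ s : ℝ in 𝓝[>] (1 : ℝ), s ∈ Ioc 1 r := Ioc_mem_nhdsGT hr
  have hB : Bornology.IsBounded (Φ ⁻¹' closedBall 0 r) :=
    (tendsto_cobounded_of_tendsto_div (ofReal_ne_zero.2 hγ.ne') hΦlim).isBounded_preimage
      isBounded_closedBall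
  have hΨB : ∀ᶠ s : ℝ in 𝓝[>] (1 : ℝ), Ψ (s : ℂ) ∈ closure (Φ ⁻¹' closedBall 0 r) :=
    hnear.mono fun s hs => subset_closure <| by
      simp [hΨr _ (hnorm s hs.1), abs_of_pos (by linarith [hs.1] : (0 : ℝ) < s), hs.2]
  obtain ⟨z₀, -, hz₀⟩ := hB.isCompact_closure.exists_mapClusterPt_of_frequently hΨB.frequently
  have hΦΨ : Tendsto (Φ ∘ fun s : ℝ => Ψ s) (𝓝[>] 1) (𝓝 1) := by
    refine Tendsto.congr' (hnear.mono fun s hs => (hΨr _ (hnorm s hs.1)).symm) ?_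
    simpa using (continuous_ofReal.tendsto (1 : ℝ)).mono_left nhdsWithin_le_nhds
  have hz₀K : z₀ ∈ K :=
    mem_of_mapClusterPt_of_tendsto_notMem hK.1.isClosed hΦdiff.continuousOn hΦbij.mapsTo hz₀ hΦΨ
      (by simp)
  have hlow : 1 + ∑' j, α n (j + 1) / r ^ (j + 1) ≤ ‖(F n).eval z₀‖ :=
    (isClosed_le continuous_const (F n).continuous.norm).mem_of_mapClusterPt hz₀ <|
      hnear.mono fun s hs => (one_add_tsum_div_pow_le_re (fun j => hα n (j + 1)) hs.1 hs.2 hsum_r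
        (hexp n hn s (hnorm s hs.1))).trans (re_le_norm _)
  exact hlow.trans (norm_le_supNorm hK.1 (F n).continuous.continuousOn hz₀K)

/-- Lower bound for `‖Fₙ‖_K` when the Faber expansions `Fₙ(Ψ(w)) = wⁿ + ∑_{j≥1} αⱼ⁽ⁿ⁾ w⁻ʲ`
have nonnegative coefficients (which holds, by Curtiss's theorem, whenever `K` is in the
positive class): for every `n ≥ 1` and every `r > 1`, `‖Fₙ‖_K ≥ 1 + ∑_{j≥1} αⱼ⁽ⁿ⁾ r⁻ʲ`. -/
theorem supNorm_faber_ge_of_nonneg_coeffs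
    (K : Set ℂ) (Φ : ℂ → ℂ) (γ : ℝ) (F : ℕ → Polynomial ℂ)
    (hK : IsContinuum K) (hΦ : IsExtRiemannMap K Φ γ) (hF : IsFaberFamily Φ F)
    (Ψ : ℂ → ℂ) (hΨl : ∀ z ∈ Kᶜ, Ψ (Φ z) = z)
    (hΨr : ∀ w : ℂ, 1 < ‖w‖ → Φ (Ψ w) = w)
    (α : ℕ → ℕ → ℝ) (hα : ∀ n j : ℕ, 0 ≤ α n j)
    (hexp : ∀ n : ℕ, 1 ≤ n → ∀ w : ℂ, 1 < ‖w‖ →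
      HasSum (fun j : ℕ => (α n (j + 1) : ℂ) / w ^ (j + 1)) ((F n).eval (Ψ w) - w ^ n)) :
    ∀ n : ℕ, 1 ≤ n → ∀ r : ℝ, 1 < r →
      1 + ∑' j : ℕ, α n (j + 1) / r ^ (j + 1) ≤ supNorm (fun z => (F n).eval z) K :=
  supNorm_faber_ge_of_nonneg_coeffs_general K Φ γ F hK hΦ Ψ hΨr α hα hexp

end
end

section
/- (Sharpness of Bohr's radius 1/3) For every ε with 0 < ε < 2/3 there exist a holomorphic function f on the open unit disk 𝔻 with |f(z)| < 1 for all z ∈ 𝔻, with Taylor expansion f(z) = ∑_{n≥0} a_n zⁿ, and a point z ∈ ℂ with |z| = 1/3 + ε, such that ∑_{n≥0} |a_n|·|z|ⁿ > 1. -/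
/-!
The disk automorphism `φ_a(z) = (a - z) / (1 - ā z)` has Taylor coefficients `a` and
`-(1 - |a|²) āⁿ⁻¹` (`n ≥ 1`), so its majorant series at radius `t` sums to
`|a| + (1 - |a|²) t / (1 - |a| t)`. This exceeds `1` exactly when `t (1 + 2|a|) > 1`, and
letting `|a| → 1` pushes that threshold down to `t > 1/3`.
-/

open Complex Metric ComplexConjugate

lemma one_lt_add_mul_div_one_sub_mul {s t : ℝ} (hs : s < 1) (hst : s * t < 1)
    (h : 1 < t * (1 + 2 * s)) : 1 < s + (1 - s ^ 2) * t / (1 - s * t) := by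
  have hden : 0 < 1 - s * t := by linarith
  have key : s + (1 - s ^ 2) * t / (1 - s * t) - 1 =
      (1 - s) * (t * (1 + 2 * s) - 1) / (1 - s * t) := by
    field_simp
    ring
  rw [← sub_pos, key]
  exact div_pos (mul_pos (sub_pos.mpr hs) (sub_pos.mpr h)) hden

namespace Complex

noncomputable def blaschkeFactor (a z : ℂ) : ℂ := (a - z) / (1 - conj a * z)

noncomputable def blaschkeCoeff (a : ℂ) : ℕ → ℂ
  | 0 => a
  | n + 1 => -(1 - (‖a‖ : ℂ) ^ 2) * conj a ^ n

variable {a w : ℂ}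

lemma one_sub_conj_mul_ne_zero (h : ‖a‖ * ‖w‖ < 1) : 1 - conj a * w ≠ 0 := by
  rw [sub_ne_zero]
  refine fun h1 => h.ne ?_
  rw [← norm_conj a, ← norm_mul, ← h1, norm_one]

lemma normSq_one_sub_conj_mul_sub_normSq_sub (a w : ℂ) :
    normSq (1 - conj a * w) - normSq (a - w) = (1 - normSq a) * (1 - normSq w) := by
  simp only [normSq_apply, sub_re, sub_im, mul_re, mul_im, conj_re, conj_im, one_re, one_im]
  ring

lemma norm_blaschkeFactor_lt_one (ha : ‖a‖ < 1) (hw : ‖w‖ < 1) :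
    ‖blaschkeFactor a w‖ < 1 := by
  have hden := one_sub_conj_mul_ne_zero
    (mul_lt_one_of_nonneg_of_lt_one_left (norm_nonneg a) ha hw.le)
  rw [blaschkeFactor, norm_div, div_lt_one (norm_pos_iff.mpr hden), ← sq_lt_sq₀ (norm_nonneg _)
    (norm_nonneg _), Complex.sq_norm, Complex.sq_norm, ← sub_pos,
    normSq_one_sub_conj_mul_sub_normSq_sub, ← Complex.sq_norm, ← Complex.sq_norm]
  apply mul_pos <;> nlinarith [norm_nonneg a, norm_nonneg w]

lemma differentiableOn_blaschkeFactor (ha : ‖a‖ ≤ 1) :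
    DifferentiableOn ℂ (blaschkeFactor a) (ball 0 1) := by
  refine DifferentiableOn.div (by fun_prop) (by fun_prop) fun w hw => one_sub_conj_mul_ne_zero ?_
  rw [mem_ball_zero_iff] at hw
  exact lt_of_le_of_lt (mul_le_of_le_one_left (norm_nonneg w) ha) hw

lemma hasSum_blaschkeCoeff_mul_pow (h : ‖a‖ * ‖w‖ < 1) :
    HasSum (fun n => blaschkeCoeff a n * w ^ n) (blaschkeFactor a w) := by
  have hgeom : HasSum (fun n => blaschkeCoeff a (n + 1) * w ^ (n + 1))
      (-(1 - (‖a‖ : ℂ) ^ 2) * w * (1 - conj a * w)⁻¹) := by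
    refine ((hasSum_geometric_of_norm_lt_one (ξ := conj a * w) ?_).mul_left
      (-(1 - (‖a‖ : ℂ) ^ 2) * w)).congr_fun fun n => ?_
    · rwa [norm_mul, norm_conj]
    · simp only [blaschkeCoeff]
      ring
  have hden := one_sub_conj_mul_ne_zero h
  have hval : blaschkeCoeff a 0 * w ^ 0 + -(1 - (‖a‖ : ℂ) ^ 2) * w * (1 - conj a * w)⁻¹ =
      blaschkeFactor a w := by
    rw [blaschkeFactor, blaschkeCoeff, pow_zero, mul_one, ← mul_conj']
    field_simp
    ring
  exact hval ▸ HasSum.zero_add (f := fun n => blaschkeCoeff a n * w ^ n) hgeom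

lemma norm_blaschkeCoeff_succ (ha : ‖a‖ ≤ 1) (n : ℕ) :
    ‖blaschkeCoeff a (n + 1)‖ = (1 - ‖a‖ ^ 2) * ‖a‖ ^ n := by
  rw [blaschkeCoeff, norm_mul, norm_neg, norm_pow, norm_conj, ← ofReal_pow, ← ofReal_one,
    ← ofReal_sub, norm_real, Real.norm_of_nonneg (by nlinarith [norm_nonneg a])]

lemma hasSum_norm_blaschkeCoeff_mul_pow (ha : ‖a‖ ≤ 1) {t : ℝ} (ht : 0 ≤ t)
    (hat : ‖a‖ * t < 1) :
    HasSum (fun n => ‖blaschkeCoeff a n‖ * t ^ n)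
      (‖a‖ + (1 - ‖a‖ ^ 2) * t / (1 - ‖a‖ * t)) := by
  have hgeom : HasSum (fun n => ‖blaschkeCoeff a (n + 1)‖ * t ^ (n + 1))
      ((1 - ‖a‖ ^ 2) * t / (1 - ‖a‖ * t)) := by
    rw [div_eq_mul_inv]
    have h1 := (hasSum_geometric_of_lt_one (by positivity) hat).mul_left ((1 - ‖a‖ ^ 2) * t)
    refine h1.congr_fun fun n => ?_
    rw [norm_blaschkeCoeff_succ ha]
    ring
  have := HasSum.zero_add (f := fun n => ‖blaschkeCoeff a n‖ * t ^ n) hgeom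
  rwa [pow_zero, mul_one, blaschkeCoeff] at this

lemma one_lt_tsum_norm_blaschkeCoeff_mul_pow (ha : ‖a‖ < 1) {t : ℝ} (ht : 0 ≤ t)
    (hat : ‖a‖ * t < 1) (h : 1 < t * (1 + 2 * ‖a‖)) :
    1 < ∑' n, ‖blaschkeCoeff a n‖ * t ^ n := by
  rw [(hasSum_norm_blaschkeCoeff_mul_pow ha.le ht hat).tsum_eq]
  exact one_lt_add_mul_div_one_sub_mul ha hat h

lemma exists_one_lt_tsum_norm_blaschkeCoeff_mul_pow {t : ℝ} (ht : 1 / 3 < t) :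
    ∃ a : ℂ, ‖a‖ < 1 ∧ 1 < ∑' n, ‖blaschkeCoeff a n‖ * t ^ n := by
  -- `‖a‖` has to lie in `((1 - t) / (2t), min 1 (1 / t))`;
  -- `2 / (1 + 3t)` does for every `t > 1/3`
  have hpos : 0 < 1 + 3 * t := by linarith
  have hnorm : ‖((2 / (1 + 3 * t) : ℝ) : ℂ)‖ = 2 / (1 + 3 * t) := by
    rw [norm_real, Real.norm_of_nonneg (by positivity)]
  refine ⟨(2 / (1 + 3 * t) : ℝ), ?_,
    one_lt_tsum_norm_blaschkeCoeff_mul_pow ?_ (by linarith) ?_ ?_⟩ <;> rw [hnorm]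
  · rw [div_lt_one hpos]; linarith
  · rw [div_lt_one hpos]; linarith
  · rw [div_mul_eq_mul_div, div_lt_one hpos]; linarith
  · field_simp
    nlinarith

end Complex

theorem bohr_radius_sharp_general
    (ε : ℝ) (hε : 0 < ε) :
    ∃ (f : ℂ → ℂ) (a : ℕ → ℂ) (z : ℂ),
      DifferentiableOn ℂ f (ball (0 : ℂ) 1) ∧
      (∀ w ∈ ball (0 : ℂ) 1, HasSum (fun n : ℕ => a n * w ^ n) (f w)) ∧
      (∀ w ∈ ball (0 : ℂ) 1, ‖f w‖ < 1) ∧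
      ‖z‖ = 1 / 3 + ε ∧
      1 < ∑' n : ℕ, ‖a n‖ * ‖z‖ ^ n := by
  obtain ⟨a, ha, hsum⟩ :=
    exists_one_lt_tsum_norm_blaschkeCoeff_mul_pow (t := 1 / 3 + ε) (by linarith)
  have hz : ‖((1 / 3 + ε : ℝ) : ℂ)‖ = 1 / 3 + ε := by
    rw [norm_real, Real.norm_of_nonneg (by linarith)]
  refine ⟨blaschkeFactor a, blaschkeCoeff a, (1 / 3 + ε : ℝ),
    differentiableOn_blaschkeFactor ha.le,
    fun w hw => hasSum_blaschkeCoeff_mul_pow ?_,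
    fun w hw => norm_blaschkeFactor_lt_one ha (mem_ball_zero_iff.mp hw), hz, by rwa [hz]⟩
  exact mul_lt_one_of_nonneg_of_lt_one_left (norm_nonneg a) ha (mem_ball_zero_iff.mp hw).le

/-- Sharpness of Bohr's radius `1/3`: for every `0 < ε < 2/3` there are a holomorphic
`f : 𝔻 → 𝔻` with Taylor coefficients `(aₙ)` and a point `z` with `|z| = 1/3 + ε` such that
`∑ |aₙ||z|ⁿ > 1`. -/
theorem bohr_radius_sharp
    (ε : ℝ) (hε : 0 < ε) (hε' : ε < 2 / 3) :
    ∃ (f : ℂ → ℂ) (a : ℕ → ℂ) (z : ℂ),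
      DifferentiableOn ℂ f (ball (0 : ℂ) 1) ∧
      (∀ w ∈ ball (0 : ℂ) 1, HasSum (fun n : ℕ => a n * w ^ n) (f w)) ∧
      (∀ w ∈ ball (0 : ℂ) 1, ‖f w‖ < 1) ∧
      ‖z‖ = 1 / 3 + ε ∧
      1 < ∑' n : ℕ, ‖a n‖ * ‖z‖ ^ n :=
  bohr_radius_sharp_general ε hε
end
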